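/- arXiv:1608.05032 — 5 statements merged into one kernel-verified Lean document; each statement's English description precedes it below -/
import Mathlib

section
/- If a probability measure μ on the space of finite rooted binary trees (with μ(φ)=0) is prune-invariant, i.e., the pushforward ν = μ∘R⁻¹ under the pruning map satisfies ν(T | T ≠ φ) = μ(T), then the distribution of Horton-Strahler orders is geometric: μ(H_K) = p(1−p)^{K−1} for all K ≥ 1, where p = μ(H_1). -/
/-!
Removing the single root edge of an order-1 tree gives `φ`, and pruning lowers the order of
every other tree by exactly one. Hence `R ⁻¹' H_K = H_{K+1}` for `K ≥ 1`, while `ν(T ≠ φ)` is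
the mass of the trees of order at least two, i.e. `1 - p`. Prune-invariance applied to
`A = H_K` then reads `μ(H_{K+1}) = (1 - p) μ(H_K)`, a geometric recursion.
-/

open MeasureTheory

theorem eq_mul_pow_of_succ_eq_mul {M : Type*} [CommMonoid M] {f : ℕ → M} {q : M}
    (hf : ∀ n, 1 ≤ n → f (n + 1) = q * f n) {n : ℕ} (hn : 1 ≤ n) :
    f n = f 1 * q ^ (n - 1) := by
  induction n, hn using Nat.le_induction with
  | base => simp
  | succ n hn ih =>
    rw [hf n hn, ih, Nat.add_sub_cancel, mul_left_comm, ← pow_succ', Nat.sub_add_cancel hn]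

section Pruning

variable {T : Type*} {R : T → T} {φ : T} {ord : T → ℕ}

theorem prune_eq_empty_iff (hRφ : R φ = φ) (hord0 : ord φ = 0)
    (hordφ : ∀ t, ord t = 0 → t = φ) (hords : ∀ t, t ≠ φ → ord t = ord (R t) + 1) (t : T) :
    R t = φ ↔ t = φ ∨ ord t = 1 := by
  by_cases ht : t = φ
  · simp [ht, hRφ]
  · have hRt : ord (R t) = 0 ↔ R t = φ := ⟨hordφ _, fun h => h ▸ hord0⟩
    rw [hords t ht]
    simp [ht, hRt]

theorem prune_preimage_setOf_ord_eq (hRφ : R φ = φ) (hord0 : ord φ = 0)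
    (hords : ∀ t, t ≠ φ → ord t = ord (R t) + 1) {K : ℕ} (hK : 1 ≤ K) :
    R ⁻¹' {t | ord t = K} = {t | ord t = K + 1} := by
  ext t
  by_cases ht : t = φ
  · subst ht
    simp only [Set.mem_preimage, Set.mem_ofPred_eq, hRφ, hord0]
    omega
  · simp only [Set.mem_preimage, Set.mem_ofPred_eq, hords t ht]
    omega

variable [MeasurableSpace T] {μ : Measure T}

theorem measure_preimage_prune_singleton_empty (hRφ : R φ = φ) (hord0 : ord φ = 0)
    (hordφ : ∀ t, ord t = 0 → t = φ) (hords : ∀ t, t ≠ φ → ord t = ord (R t) + 1)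
    (hφ : μ {φ} = 0) :
    μ (R ⁻¹' {φ}) = μ {t | ord t = 1} := by
  have hset : R ⁻¹' {φ} = {t | ord t = 1} ∪ {φ} := by
    ext t
    simp [prune_eq_empty_iff hRφ hord0 hordφ hords t]
  rw [hset]
  exact measure_congr (union_ae_eq_left_of_ae_eq_empty (ae_eq_empty.mpr hφ))

theorem map_prune_setOf_ne_empty [MeasurableSingletonClass T] [IsProbabilityMeasure μ]
    (hR : Measurable R) (hRφ : R φ = φ) (hord0 : ord φ = 0) (hordφ : ∀ t, ord t = 0 → t = φ)
    (hords : ∀ t, t ≠ φ → ord t = ord (R t) + 1) (hφ : μ {φ} = 0) :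
    μ.map R {t | t ≠ φ} = 1 - μ {t | ord t = 1} := by
  have hne : {t | t ≠ φ} = ({φ}ᶜ : Set T) := rfl
  rw [hne, Measure.map_apply hR (measurableSet_singleton φ).compl, Set.preimage_compl,
    prob_compl_eq_one_sub (hR (measurableSet_singleton φ)),
    measure_preimage_prune_singleton_empty hRφ hord0 hordφ hords hφ]

theorem measure_ord_succ_eq_mul [MeasurableSingletonClass T] [IsProbabilityMeasure μ]
    (hR : Measurable R) (hord : Measurable ord) (hRφ : R φ = φ) (hord0 : ord φ = 0)
    (hordφ : ∀ t, ord t = 0 → t = φ) (hords : ∀ t, t ≠ φ → ord t = ord (R t) + 1)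
    (hφ : μ {φ} = 0)
    (hinv : ∀ A : Set T, μ.map R (A ∩ {t | t ≠ φ}) = μ.map R {t | t ≠ φ} * μ A)
    {K : ℕ} (hK : 1 ≤ K) :
    μ {t | ord t = K + 1} = (1 - μ {t | ord t = 1}) * μ {t | ord t = K} := by
  have hH : {t | ord t = K} ∩ {t | t ≠ φ} = {t | ord t = K} := by
    refine Set.inter_eq_left.mpr fun t ht (he : t = φ) => ?_
    simp only [Set.mem_ofPred_eq, he, hord0] at ht
    omega
  have hmeasK : MeasurableSet {t | ord t = K} := hord (measurableSet_singleton K)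
  have := hinv {t | ord t = K}
  rwa [hH, Measure.map_apply hR hmeasK,
    prune_preimage_setOf_ord_eq hRφ hord0 hords hK,
    map_prune_setOf_ne_empty hR hRφ hord0 hordφ hords hφ] at this

end Pruning

/-- **Prune-invariance implies geometric order distribution.**
`Tree` is the space of finite rooted binary trees with empty tree `φ`,
`R` is the pruning map (with `R φ = φ`), and `ord` is the Horton–Strahler
order, characterized by `ord φ = 0` and `ord t = ord (R t) + 1` for `t ≠ φ`.
If a probability measure `μ` with `μ {φ} = 0` is prune-invariant, i.e. the
pushforward `ν = μ ∘ R⁻¹` satisfies `ν(A | ≠ φ) = μ(A)`, then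
`μ(H_K) = p (1-p)^(K-1)` with `p = μ(H_1)`. -/
theorem stmt_0 {Tree : Type*} [MeasurableSpace Tree]
    (hmeas : ∀ s : Set Tree, MeasurableSet s)
    (R : Tree → Tree) (φ : Tree) (hRφ : R φ = φ)
    (ord : Tree → ℕ) (hord0 : ord φ = 0)
    (hordφ : ∀ t, ord t = 0 → t = φ)
    (hords : ∀ t, t ≠ φ → ord t = ord (R t) + 1)
    (μ : Measure Tree) [IsProbabilityMeasure μ] (hφ : μ {φ} = 0)
    (hinv : ∀ A : Set Tree,
      (μ.map R) (A ∩ {t | t ≠ φ}) = (μ.map R) {t | t ≠ φ} * μ A) :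
    ∀ K : ℕ, 1 ≤ K →
      μ {t | ord t = K} = μ {t | ord t = 1} * (1 - μ {t | ord t = 1}) ^ (K - 1) := by
  have : MeasurableSingletonClass Tree := ⟨fun _ => hmeas _⟩
  intro K hK
  refine eq_mul_pow_of_succ_eq_mul (f := fun K => μ {t | ord t = K}) (fun n hn => ?_) hK
  exact measure_ord_succ_eq_mul (fun s _ => hmeas _) (fun s _ => hmeas _) hRφ hord0
    hordφ hords hφ hinv hn
end

section
/- Pruning decreases branch orders by one: for any binary tree T and any k ≥ 2, the number of Horton-Strahler branches of order k in T equals the number of branches of order k−1 in R(T), i.e., N_k[T] = N_{k−1}[R(T)]. -/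
/-- Finite rooted full (reduced) binary trees: either a leaf or an internal
vertex with two children. -/
inductive BTree : Type
  | leaf : BTree
  | node : BTree → BTree → BTree

namespace BTree

/-- Horton–Strahler order: leaves have order 1 and an internal vertex with
children of orders `i, j` has order `max i j + δ_{ij}`. -/
def hs : BTree → ℕ
  | leaf => 1
  | node l r => max (hs l) (hs r) + (if hs l = hs r then 1 else 0)

/-- Pruning: remove the leaves and their parental edges, then apply series
reduction.  The result is `none` when the whole tree is eliminated
(i.e. for the single-leaf tree). -/
def prune : BTree → Option BTree
  | leaf => none
  | node l r =>
    match prune l, prune r with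
    | none, none => some leaf
    | none, some r' => some r'
    | some l', none => some l'
    | some l', some r' => some (node l' r')

/-- `branches k t` is the number `N_k[t]` of Horton–Strahler branches of
order `k` in `t`: the number of order-`k` vertices having no child of order
`k` (each branch, a maximal chain of same-order vertices, is counted at its
lowest vertex). -/
def branches (k : ℕ) : BTree → ℕ
  | leaf => if k = 1 then 1 else 0
  | node l r =>
      branches k l + branches k r +
        (if hs (node l r) = k ∧ hs l = hs r then 1 else 0)

end BTree

/-!
Pruning lowers the Horton–Strahler order of every surviving vertex by exactly one: a vertex
with exactly one leaf child, removed by series reduction, has the order of its other child, and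
the rule `(i, j) ↦ max i j + δ_{ij}` commutes with adding one to both orders. Hence the
order-`k` vertices of `t` without an order-`k` child, which count the branches, correspond to
the order-`(k - 1)` vertices of `R(t)` without an order-`(k - 1)` child.
-/

namespace BTree

lemma node_ne_leaf (l r : BTree) : node l r ≠ leaf := nofun

lemma one_le_hs : ∀ t, 1 ≤ hs t
  | leaf => le_rfl
  | node l r => by
    have := one_le_hs l
    simp only [hs]
    omega

lemma one_lt_hs {t : BTree} (ht : t ≠ leaf) : 1 < hs t := by
  cases t with
  | leaf => exact absurd rfl ht
  | node l r =>
    have := one_le_hs l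
    have := one_le_hs r
    simp only [hs]
    split_ifs <;> omega

lemma hs_node_leaf_left {r : BTree} (hr : r ≠ leaf) : hs (node leaf r) = hs r := by
  have h : hs leaf < hs r := one_lt_hs hr
  rw [hs, if_neg h.ne, max_eq_right h.le, add_zero]

lemma hs_node_leaf_right {l : BTree} (hl : l ≠ leaf) : hs (node l leaf) = hs l := by
  have h : hs leaf < hs l := one_lt_hs hl
  rw [hs, if_neg h.ne', max_eq_left h.le, add_zero]

lemma hs_node_eq_succ {l r l' r' : BTree} (hl : hs l = hs l' + 1) (hr : hs r = hs r' + 1) :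
    hs (node l r) = hs (node l' r') + 1 := by
  simp only [hs, hl, hr]
  split_ifs <;> omega

lemma prune_eq_none_iff {t : BTree} : prune t = none ↔ t = leaf := by
  cases t with
  | leaf => simp [prune]
  | node l r =>
    simp only [prune, reduceCtorEq, iff_false]
    split <;> simp

lemma prune_node_leaf_left {r : BTree} (hr : r ≠ leaf) : prune (node leaf r) = prune r := by
  obtain ⟨r', h⟩ := Option.ne_none_iff_exists'.mp (mt prune_eq_none_iff.mp hr)
  simp [prune, h]

lemma prune_node_leaf_right {l : BTree} (hl : l ≠ leaf) : prune (node l leaf) = prune l := by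
  obtain ⟨l', h⟩ := Option.ne_none_iff_exists'.mp (mt prune_eq_none_iff.mp hl)
  simp [prune, h]

lemma prune_node_of_prune_eq_some {l r l' r' : BTree} (hl : prune l = some l')
    (hr : prune r = some r') : prune (node l r) = some (node l' r') := by
  simp [prune, hl, hr]

lemma exists_prune_node_eq_some (l r : BTree) : ∃ t', prune (node l r) = some t' :=
  Option.ne_none_iff_exists'.mp (mt prune_eq_none_iff.mp (node_ne_leaf l r))

lemma hs_prune : ∀ {t t' : BTree}, prune t = some t' → hs t = hs t' + 1
  | leaf, _, h => by simp [prune] at h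
  | node leaf leaf, _, h => by
    simp only [prune, Option.some.injEq] at h
    subst h
    rfl
  | node leaf (node a b), t', h => by
    rw [prune_node_leaf_left (node_ne_leaf a b)] at h
    rw [hs_node_leaf_left (node_ne_leaf a b), hs_prune h]
  | node (node a b) leaf, t', h => by
    rw [prune_node_leaf_right (node_ne_leaf a b)] at h
    rw [hs_node_leaf_right (node_ne_leaf a b), hs_prune h]
  | node (node a b) (node c d), t', h => by
    obtain ⟨l', hl⟩ := exists_prune_node_eq_some a b
    obtain ⟨r', hr⟩ := exists_prune_node_eq_some c d
    rw [prune_node_of_prune_eq_some hl hr, Option.some.injEq] at h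
    subst h
    exact hs_node_eq_succ (hs_prune hl) (hs_prune hr)

lemma branches_node_leaf_left {k : ℕ} (hk : k ≠ 1) {r : BTree} (hr : r ≠ leaf) :
    branches k (node leaf r) = branches k r := by
  have h : hs leaf < hs r := one_lt_hs hr
  rw [branches, branches, if_neg hk, if_neg fun h' => h.ne h'.2, zero_add, add_zero]

lemma branches_node_leaf_right {k : ℕ} (hk : k ≠ 1) {l : BTree} (hl : l ≠ leaf) :
    branches k (node l leaf) = branches k l := by
  have h : hs leaf < hs l := one_lt_hs hl
  rw [branches, branches, if_neg hk, if_neg fun h' => h.ne' h'.2, add_zero, add_zero]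

theorem branches_eq_elim_prune {k : ℕ} (hk : 2 ≤ k) :
    ∀ t, branches k t = (prune t).elim 0 (branches (k - 1))
  | leaf => by simp [branches, prune]; omega
  | node leaf leaf => by
    simp only [branches, prune, hs, Option.elim, max_self, if_true, and_true]
    split_ifs <;> omega
  | node leaf (node a b) => by
    rw [prune_node_leaf_left (node_ne_leaf a b),
      branches_node_leaf_left (by omega) (node_ne_leaf a b), branches_eq_elim_prune hk]
  | node (node a b) leaf => by
    rw [prune_node_leaf_right (node_ne_leaf a b),
      branches_node_leaf_right (by omega) (node_ne_leaf a b), branches_eq_elim_prune hk]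
  | node (node a b) (node c d) => by
    obtain ⟨l', hl⟩ := exists_prune_node_eq_some a b
    obtain ⟨r', hr⟩ := exists_prune_node_eq_some c d
    have hl₁ := hs_prune hl
    have hr₁ := hs_prune hr
    have hn := hs_node_eq_succ hl₁ hr₁
    have hbottom : (hs (node (node a b) (node c d)) = k ∧ hs (node a b) = hs (node c d)) ↔
        (hs (node l' r') = k - 1 ∧ hs l' = hs r') := by
      omega
    rw [branches, prune_node_of_prune_eq_some hl hr, branches_eq_elim_prune hk,
      branches_eq_elim_prune hk, hl, hr]
    simp only [Option.elim, branches, hbottom]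

end BTree

/-- **Pruning decreases branch orders by one:** for any binary tree `t` and
any `k ≥ 2`, the number of branches of order `k` in `t` equals the number of
branches of order `k - 1` in the pruned tree `R(t)` (with the empty tree
having no branches). -/
theorem stmt_3 (t : BTree) (k : ℕ) (hk : 2 ≤ k) :
    BTree.branches k t = (BTree.prune t).elim 0 (BTree.branches (k - 1)) :=
  BTree.branches_eq_elim_prune hk t
end

section
/- For a self-similar hierarchical branching process with λ_j = γζ^{−j} and p_K = p(1−p)^{K−1}, the hydrodynamic average branch-count vector satisfies x(s) = π + Σ_{m=1}^∞ (s^m/m!) [∏_{i=1}^m t̂(ζ^{−i}(1−p))] Λ^m π, where π = Σ_K p_K e_K. -/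
/-!
A Toeplitz operator acts on a geometric vector `(c wⁿ)ₙ` as multiplication by its symbol `t̂(w)`,
and the diagonal operator `Λ` maps a geometric vector of ratio `w` to one of ratio `w / ζ`.
Since `π` is geometric of ratio `1 - p`, induction gives
`(GΛ)ᵐ π = [∏_{i=1}^m t̂((1 - p) / ζⁱ)] Λᵐ π`, and the claim is the exponential series
applied to `π`. The symbol converges at `(1 - p) / ζⁱ ≤ (1 - p) / ζ` by comparison, as `T ≥ 0`.
-/

open Finset
open scoped Nat ENNReal

local notation "ℓ¹" => lp (fun _ : ℕ => ℝ) 1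

theorem ContinuousLinearMap.hasSum_exp_smul_apply {𝕂 E : Type*} [RCLike 𝕂] [NormedAddCommGroup E]
    [NormedSpace 𝕂 E] [CompleteSpace E] (A : E →L[𝕂] E) (s : 𝕂) (v : E) :
    HasSum (fun n : ℕ => (s ^ n / n !) • (A ^ n) v) (NormedSpace.exp (s • A) v) := by
  simpa only [ContinuousLinearMap.apply_apply, smul_apply, smul_pow, smul_smul, div_eq_inv_mul]
    using (NormedSpace.exp_series_hasSum_exp' (𝕂 := 𝕂) (s • A)).mapL
      (ContinuousLinearMap.apply 𝕂 E v)

theorem ContinuousLinearMap.comp_pow_apply_eq_prod_smul {R M : Type*} [CommSemiring R]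
    [TopologicalSpace M] [AddCommMonoid M] [Module R M] (G L : M →L[R] M) (μ : ℕ → R) (v : M)
    (hμ : ∀ m, G ((L ^ (m + 1)) v) = μ m • (L ^ (m + 1)) v) (m : ℕ) :
    ((G.comp L) ^ m) v = (∏ i ∈ range m, μ i) • (L ^ m) v := by
  induction m with
  | zero => simp
  | succ m ih =>
    rw [pow_succ', mul_apply_eq_comp, ih, ContinuousLinearMap.comp_apply, map_smul,
      ← mul_apply_eq_comp, ← pow_succ', map_smul, hμ, smul_smul, prod_range_succ, mul_comm]

theorem lp.pow_apply_of_diagonal {ι 𝕜 : Type*} [NormedField 𝕜] {q : ℝ≥0∞} [Fact (1 ≤ q)]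
    {L : lp (fun _ : ι => 𝕜) q →L[𝕜] lp (fun _ : ι => 𝕜) q} {d : ι → 𝕜}
    (hL : ∀ x i, L x i = d i * x i) (m : ℕ) (x : lp (fun _ : ι => 𝕜) q) (i : ι) :
    (L ^ m) x i = d i ^ m * x i := by
  induction m with
  | zero => simp
  | succ m ih => rw [pow_succ', mul_apply_eq_comp, hL, ih, pow_succ']; ring

theorem lp.pow_apply_geometric_of_diagonal {𝕜 : Type*} [NormedField 𝕜] {q : ℝ≥0∞} [Fact (1 ≤ q)]
    {γ ζ : 𝕜} {L : lp (fun _ : ℕ => 𝕜) q →L[𝕜] lp (fun _ : ℕ => 𝕜) q}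
    (hL : ∀ x n, L x n = γ / ζ ^ (n + 1) * x n) {c r : 𝕜} {x : lp (fun _ : ℕ => 𝕜) q}
    (hx : ∀ n, x n = c * r ^ n) (m n : ℕ) :
    (L ^ m) x n = (γ / ζ) ^ m * c * (r / ζ ^ m) ^ n := by
  rw [lp.pow_apply_of_diagonal hL, hx]
  field_simp
  ring

/-- The paper's `t̂(w)`, the eigenvalue of `G` on the geometric vector `(wⁿ)ₙ`. -/
noncomputable def toeplitzSymbol (T : ℕ → ℝ) (w : ℝ) : ℝ :=
  -1 + 2 * w + ∑' k : ℕ, T (k + 1) * w ^ (k + 1)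

theorem summable_mul_pow_succ_of_le {T : ℕ → ℝ} (hT : ∀ k, 0 ≤ T k) {w w₀ : ℝ}
    (hw₀ : Summable fun k : ℕ => T (k + 1) * w₀ ^ (k + 1)) (hw : 0 ≤ w) (hww₀ : w ≤ w₀) :
    Summable fun k : ℕ => T (k + 1) * w ^ (k + 1) :=
  hw₀.of_nonneg_of_le (fun _ => mul_nonneg (hT _) (pow_nonneg hw _))
    fun _ => mul_le_mul_of_nonneg_left (pow_le_pow_left₀ hw hww₀ _) (hT _)

theorem toeplitz_apply_geometric (T : ℕ → ℝ) {G : ℓ¹ →L[ℝ] ℓ¹}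
    (hG : ∀ x n, G x n = -(x n) + (T 1 + 2) * x (n + 1) + ∑' k : ℕ, T (k + 2) * x (n + k + 2))
    {w c : ℝ} (hw : Summable fun k : ℕ => T (k + 1) * w ^ (k + 1)) {v : ℓ¹}
    (hv : ∀ n, v n = c * w ^ n) :
    G v = toeplitzSymbol T w • v := by
  ext n
  have htail : ∑' k : ℕ, T (k + 2) * v (n + k + 2)
      = c * w ^ n * ∑' k : ℕ, T (k + 2) * w ^ (k + 2) := by
    rw [← tsum_mul_left]
    congr 1 with k
    rw [hv, show n + k + 2 = n + (k + 2) by ring, pow_add]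
    ring
  rw [hG, htail, hv, hv, lp.coeFn_smul, Pi.smul_apply, hv, smul_eq_mul, toeplitzSymbol,
    hw.tsum_eq_zero_add]
  ring

theorem stmt_12_general (T : ℕ → ℝ) (hT : ∀ k, 0 ≤ T k)
    (p γ ζ : ℝ) (hp1 : p < 1) (hζ : 1 ≤ ζ)
    (hsum : Summable fun k : ℕ => T (k + 1) * ((1 - p) / ζ) ^ (k + 1))
    (p0 : lp (fun _ : ℕ => ℝ) 1) (hp0 : ∀ n : ℕ, p0 n = p * (1 - p) ^ n)
    (Gop Lam : lp (fun _ : ℕ => ℝ) 1 →L[ℝ] lp (fun _ : ℕ => ℝ) 1)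
    (hG : ∀ (x : lp (fun _ : ℕ => ℝ) 1) (n : ℕ),
      Gop x n = -(x n) + (T 1 + 2) * x (n + 1) +
        ∑' k : ℕ, T (k + 2) * x (n + k + 2))
    (hLam : ∀ (x : lp (fun _ : ℕ => ℝ) 1) (n : ℕ),
      Lam x n = γ / ζ ^ (n + 1) * x n) :
    ∀ s : ℝ, NormedSpace.exp (s • (Gop.comp Lam)) p0 =
      p0 + ∑' m : ℕ,
        ((s ^ (m + 1) / (Nat.factorial (m + 1)) *
            ∏ i ∈ Finset.range (m + 1),
              (-1 + 2 * ((1 - p) / ζ ^ (i + 1)) +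
                ∑' k : ℕ, T (k + 1) * ((1 - p) / ζ ^ (i + 1)) ^ (k + 1))) •
          ((Lam ^ (m + 1)) p0)) := by
  intro s
  have hw : ∀ m : ℕ, 0 ≤ (1 - p) / ζ ^ (m + 1) ∧ (1 - p) / ζ ^ (m + 1) ≤ (1 - p) / ζ := fun m =>
    ⟨div_nonneg (by linarith) (by positivity),
      div_le_div_of_nonneg_left (by linarith) (by positivity) (le_self_pow₀ hζ m.succ_ne_zero)⟩
  have heigen : ∀ m : ℕ, Gop ((Lam ^ (m + 1)) p0)
      = toeplitzSymbol T ((1 - p) / ζ ^ (m + 1)) • (Lam ^ (m + 1)) p0 := fun m =>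
    toeplitz_apply_geometric T hG (summable_mul_pow_succ_of_le hT hsum (hw m).1 (hw m).2)
      (lp.pow_apply_geometric_of_diagonal hLam hp0 (m + 1))
  have hexp := (Gop.comp Lam).hasSum_exp_smul_apply s p0
  simp only [Gop.comp_pow_apply_eq_prod_smul Lam _ p0 heigen, smul_smul] at hexp
  rw [← hexp.tsum_eq, hexp.summable.tsum_eq_zero_add]
  simp [toeplitzSymbol]

/-- **Series expansion of the hydrodynamic limit `x(s) = e^{GΛs} π`.**
In `ℓ¹(ℕ, ℝ)` (coordinate `n` ↔ order `K = n+1`), let `Gop` be the Toeplitz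
operator with diagonal `-1`, superdiagonal `T_1 + 2` and entries `T_k`,
`Lam = diag(γ ζ^{-j})`, and let `π` have coordinates `p_K = p(1-p)^{K-1}`.
Then for all `s`,
`e^{G Lam s} π = π + ∑_{m≥1} (s^m/m!) ⬝ [∏_{i=1}^m t̂(ζ^{-i}(1-p))] ⬝ Lam^m π`,
where `t̂(z) = -1 + 2z + ∑_{k≥1} T_k z^k`. -/
theorem stmt_12 (T : ℕ → ℝ) (hT : ∀ k, 0 ≤ T k)
    (p γ ζ : ℝ) (hp : 0 < p) (hp1 : p < 1) (hγ : 0 < γ) (hζ : 1 ≤ ζ)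
    (hsum : Summable fun k : ℕ => T (k + 1) * ((1 - p) / ζ) ^ (k + 1))
    (p0 : lp (fun _ : ℕ => ℝ) 1) (hp0 : ∀ n : ℕ, p0 n = p * (1 - p) ^ n)
    (Gop Lam : lp (fun _ : ℕ => ℝ) 1 →L[ℝ] lp (fun _ : ℕ => ℝ) 1)
    (hG : ∀ (x : lp (fun _ : ℕ => ℝ) 1) (n : ℕ),
      Gop x n = -(x n) + (T 1 + 2) * x (n + 1) +
        ∑' k : ℕ, T (k + 2) * x (n + k + 2))
    (hLam : ∀ (x : lp (fun _ : ℕ => ℝ) 1) (n : ℕ),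
      Lam x n = γ / ζ ^ (n + 1) * x n) :
    ∀ s : ℝ, NormedSpace.exp (s • (Gop.comp Lam)) p0 =
      p0 + ∑' m : ℕ,
        ((s ^ (m + 1) / (Nat.factorial (m + 1)) *
            ∏ i ∈ Finset.range (m + 1),
              (-1 + 2 * ((1 - p) / ζ ^ (i + 1)) +
                ∑' k : ℕ, T (k + 1) * ((1 - p) / ζ ^ (i + 1)) ^ (k + 1))) •
          ((Lam ^ (m + 1)) p0)) :=
  stmt_12_general T hT p γ ζ hp1 hζ hsum p0 hp0 Gop Lam hG hLam
end

section
/- A self-similar hierarchical branching process S_{p,γ,ζ} with 0 < p < 1, γ > 0, ζ ≥ max(1,L) is critical (C(s) ≡ 1) if and only if ζ < R and p = 1 − ζ/R, where R = w_0^{−1} for the unique root w_0 ∈ (0,1/2] of t̂. -/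
open scoped BigOperators

namespace Stmt15Aux

open Nat

noncomputable abbrev E := lp (fun _ : ℕ => ℝ) 1

lemma lp_summable_norm (x : E) : Summable fun j => ‖x j‖ := by
  have h := (lp.memℓp x).summable (p := 1) (by norm_num)
  simpa using h

lemma lp_summable (x : E) : Summable fun j => x j :=
  (lp_summable_norm x).of_norm

lemma lp_norm_eq (x : E) : ‖x‖ = ∑' j, ‖x j‖ := by
  rw [lp.norm_eq_tsum_rpow (by norm_num) x]
  simp

/-- The summation functional on `ℓ¹`. -/
noncomputable def sumL : E →L[ℝ] ℝ :=
  LinearMap.mkContinuous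
    { toFun := fun x : E => ∑' j, x j
      map_add' := fun x y => by
        simp only [lp.coeFn_add, Pi.add_apply]
        exact Summable.tsum_add (lp_summable x) (lp_summable y)
      map_smul' := fun c x => by
        simp only [lp.coeFn_smul, Pi.smul_apply, smul_eq_mul, RingHom.id_apply]
        exact tsum_mul_left }
    1
    (fun x => by
      simp only [LinearMap.coe_mk, AddHom.coe_mk, one_mul]
      calc ‖∑' j, x j‖ ≤ ∑' j, ‖x j‖ := norm_tsum_le_tsum_norm (lp_summable_norm x)
        _ = ‖x‖ := (lp_norm_eq x).symm)

@[simp] lemma sumL_apply (x : E) : sumL x = ∑' j, x j := rfl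

lemma exp_fixed (B : E →L[ℝ] E) (x : E) (hx : B x = 0) :
    NormedSpace.exp B x = x := by
  have hpow : ∀ n : ℕ, n ≠ 0 → (B ^ n) x = 0 := by
    intro n hn
    obtain ⟨m, rfl⟩ := Nat.exists_eq_succ_of_ne_zero hn
    rw [pow_succ, ContinuousLinearMap.mul_apply, hx, map_zero]
  have hs : Summable fun n : ℕ => (n !⁻¹ : ℝ) • B ^ n :=
    NormedSpace.expSeries_summable' (𝕂 := ℝ) B
  have h1 : (∑' n : ℕ, (n !⁻¹ : ℝ) • B ^ n) x
      = ∑' n : ℕ, ((n !⁻¹ : ℝ) • B ^ n) x := by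
    simpa using (ContinuousLinearMap.apply ℝ E x).map_tsum hs
  simp only [NormedSpace.exp_eq_tsum (𝕂 := ℝ)]
  rw [h1, tsum_eq_single 0 (fun n hn => by
    simp [ContinuousLinearMap.smul_apply, hpow n hn])]
  simp

end Stmt15Aux

open Stmt15Aux

/-- **Criticality of a self-similar process.**
In the setting of the hydrodynamic limit (`λ_j = γζ^{-j}`,
`p_K = p(1-p)^{K-1}`, `0 < p < 1`, `γ > 0`, `ζ ≥ 1 ∨ L`), the process is
critical, i.e. the width function `C(s) = ∑_j (e^{GΛs}π)_j` equals `1` for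
all `s ≥ 0`, if and only if `ζ < R` and `p = 1 - ζ/R`, where `1/R = w₀` is
the unique root of `t̂(z) = -1 + 2z + ∑_k T_k z^k` in `(0, 1/2]`. -/
theorem stmt_15 (T : ℕ → ℝ) (hT : ∀ k, 0 ≤ T k)
    (p γ ζ : ℝ) (hp : 0 < p) (hp1 : p < 1) (hγ : 0 < γ) (hζ : 1 ≤ ζ)
    (hsum : Summable fun k : ℕ => T (k + 1) * ((1 - p) / ζ) ^ (k + 1))
    (R : ℝ) (hR : R⁻¹ ∈ Set.Ioc (0 : ℝ) (1 / 2))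
    (hRsum : Summable fun k : ℕ => T (k + 1) * R⁻¹ ^ (k + 1))
    (hroot : -1 + 2 * R⁻¹ + (∑' k : ℕ, T (k + 1) * R⁻¹ ^ (k + 1)) = 0)
    (p0 : lp (fun _ : ℕ => ℝ) 1) (hp0 : ∀ n : ℕ, p0 n = p * (1 - p) ^ n)
    (Gop Lam : lp (fun _ : ℕ => ℝ) 1 →L[ℝ] lp (fun _ : ℕ => ℝ) 1)
    (hG : ∀ (x : lp (fun _ : ℕ => ℝ) 1) (n : ℕ),
      Gop x n = -(x n) + (T 1 + 2) * x (n + 1) +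
        ∑' k : ℕ, T (k + 2) * x (n + k + 2))
    (hLam : ∀ (x : lp (fun _ : ℕ => ℝ) 1) (n : ℕ),
      Lam x n = γ / ζ ^ (n + 1) * x n) :
    (∀ s : ℝ, 0 ≤ s →
        ∑' j : ℕ, (NormedSpace.exp (s • (Gop.comp Lam)) p0) j = 1) ↔
      (ζ < R ∧ p = 1 - ζ / R) := by
  have hζ0 : (0:ℝ) < ζ := lt_of_lt_of_le one_pos hζ
  have hR0 : (0:ℝ) < R := inv_pos.mp hR.1
  set u : ℝ := (1 - p) / ζ with hu
  have hq0 : (0:ℝ) < 1 - p := by linarith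
  have hu0 : 0 < u := div_pos hq0 hζ0
  have hu1 : u < 1 := lt_of_le_of_lt (div_le_self hq0.le hζ) (by linarith)
  set A := Gop.comp Lam with hA
  set tval : ℝ := -1 + 2 * u + ∑' k : ℕ, T (k + 1) * u ^ (k + 1) with htval
  -- coordinates of Λ p0
  have hLamp0 : ∀ j : ℕ, Lam p0 j = γ / ζ * p * u ^ j := by
    intro j
    rw [hLam, hp0, hu, div_pow]
    rw [pow_succ]
    field_simp
  -- coordinates of A p0
  have hAp0 : ∀ n : ℕ, A p0 n = γ / ζ * p * tval * u ^ n := by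
    intro n
    rw [hA, ContinuousLinearMap.comp_apply, hG, hLamp0, hLamp0]
    have h1 : ∀ k : ℕ, T (k + 2) * Lam p0 (n + k + 2)
        = (γ / ζ * p * u ^ n) * (T (k + 2) * u ^ (k + 2)) := by
      intro k
      rw [hLamp0, show n + k + 2 = n + (k + 2) by ring, pow_add]
      ring
    rw [tsum_congr h1, tsum_mul_left]
    have h2 : ∑' k : ℕ, T (k + 1) * u ^ (k + 1)
        = T 1 * u + ∑' k : ℕ, T (k + 2) * u ^ (k + 2) := by
      have h3 := Summable.tsum_eq_zero_add hsum
      simpa using h3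
    rw [htval, h2]
    ring
  -- value of the sum functional on A p0
  have hsumAp0 : sumL (A p0) = γ / ζ * p * tval * (1 - u)⁻¹ := by
    rw [sumL_apply, tsum_congr hAp0, tsum_mul_left,
      tsum_geometric_of_lt_one hu0.le hu1]
  constructor
  · -- forward direction
    intro h
    set f : ℝ → ℝ := fun s => sumL ((NormedSpace.exp (s • A)) p0) with hf
    have hfs : ∀ s : ℝ, 0 ≤ s → f s = 1 := fun s hs => h s hs
    have hder : HasDerivAt f (sumL (A p0)) 0 := by
      have h1 := hasDerivAt_exp_smul_const' (𝕂 := ℝ) A 0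
      have h2 := (sumL.comp (ContinuousLinearMap.apply ℝ E p0)).hasFDerivAt.comp_hasDerivAt 0 h1
      simpa [hf, Function.comp_def, zero_smul, NormedSpace.exp_zero, mul_one] using h2
    have hud : UniqueDiffWithinAt ℝ (Set.Ici (0:ℝ)) 0 :=
      uniqueDiffOn_Ici 0 0 Set.self_mem_Ici
    have e1 : derivWithin f (Set.Ici 0) 0 = sumL (A p0) :=
      (hder.hasDerivWithinAt).derivWithin hud
    have e2 : derivWithin f (Set.Ici 0) 0 = 0 := by
      have heq : Set.EqOn f (fun _ => (1:ℝ)) (Set.Ici 0) := fun s hs => hfs s hs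
      rw [derivWithin_congr heq (hfs 0 le_rfl)]
      exact congrFun (derivWithin_const (𝕜 := ℝ) (c := (1:ℝ)) (s := Set.Ici (0:ℝ))) 0
    have hz : sumL (A p0) = 0 := by rw [← e1, e2]
    rw [hsumAp0] at hz
    have hpos : 0 < γ / ζ * p * (1 - u)⁻¹ :=
      mul_pos (mul_pos (div_pos hγ hζ0) hp) (inv_pos.mpr (by linarith))
    have htval0 : tval = 0 := by
      have h2 : (γ / ζ * p * (1 - u)⁻¹) * tval = 0 := by rw [← hz]; ring
      rcases mul_eq_zero.mp h2 with h' | h'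
      · exact absurd h' hpos.ne'
      · exact h'
    -- t̂(u) = 0 and t̂(R⁻¹) = 0 imply u = R⁻¹ by strict monotonicity
    have hkey : u = R⁻¹ := by
      rcases lt_trichotomy u R⁻¹ with hlt | heq | hgt
      · exfalso
        have hmono : ∑' k : ℕ, T (k + 1) * u ^ (k + 1)
            ≤ ∑' k : ℕ, T (k + 1) * R⁻¹ ^ (k + 1) := by
          refine Summable.tsum_le_tsum (fun k => ?_) hsum hRsum
          exact mul_le_mul_of_nonneg_left
            (pow_le_pow_left₀ hu0.le hlt.le (k + 1)) (hT (k + 1))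
        rw [htval] at htval0
        linarith
      · exact heq
      · exfalso
        have hmono : ∑' k : ℕ, T (k + 1) * R⁻¹ ^ (k + 1)
            ≤ ∑' k : ℕ, T (k + 1) * u ^ (k + 1) := by
          refine Summable.tsum_le_tsum (fun k => ?_) hRsum hsum
          exact mul_le_mul_of_nonneg_left
            (pow_le_pow_left₀ hR.1.le hgt.le (k + 1)) (hT (k + 1))
        rw [htval] at htval0
        linarith
    have h1p : 1 - p = ζ / R := by
      have h' : (1 - p) / ζ = R⁻¹ := hkey
      field_simp at h'
      rw [eq_div_iff hR0.ne']
      linarith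
    refine ⟨?_, by linarith⟩
    have : ζ / R < 1 := by linarith
    exact (div_lt_one hR0).mp this
  · -- reverse direction
    rintro ⟨hζR, hpeq⟩
    have hueq : u = R⁻¹ := by
      rw [hu, hpeq]
      field_simp
      ring
    have htval0 : tval = 0 := by
      rw [htval, hueq]
      exact hroot
    have hA0 : A p0 = 0 := by
      apply lp.ext
      funext n
      have := hAp0 n
      rw [htval0] at this
      simpa using this
    intro s hs
    have hexp : NormedSpace.exp (s • A) p0 = p0 := by
      apply exp_fixed
      rw [ContinuousLinearMap.smul_apply, hA0, smul_zero]
    rw [hexp]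
    have : ∑' j : ℕ, (p0 : ∀ _ : ℕ, ℝ) j = ∑' j : ℕ, p * (1 - p) ^ j :=
      tsum_congr fun j => hp0 j
    rw [this, tsum_mul_left, tsum_geometric_of_lt_one (by linarith) (by linarith)]
    rw [sub_sub_cancel, mul_inv_cancel₀ hp.ne']
end

section
/- In a critical Tokunaga tree with parameter c > 1, the joint distribution of principal subtree orders, conditioned on K > 1, is P(K_a = m, K_b = j | K>1) = (c−1)c^{−j}2^{−m} for j < m and c^{−m}2^{−m} for j = m; this factorizes as a product of the (geometric 2^{−m}) marginals if and only if c = 2. -/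
/-- **Joint law of principal subtree orders and independence iff `c = 2`.**
In a critical Tokunaga tree with parameter `c > 1`
(`T_k = (c-1)c^(k-1)`, `P(K = k | K>1) = 2^{1-k}`, conditional order
statistics `P(K_1 = K_2 = k-1 | K=k) = c^{1-k}` and
`P(K_1 = j, K_2 = k | K=k) = T_{k-j} c^{1-k}` for `j < k`, with `(K_a,K_b)`
a uniform random permutation of `(K_1,K_2)`), the joint law is
`P(K_a = m, K_b = j | K>1) = (c-1)c^{-j}2^{-m}` for `j < m` and
`c^{-m}2^{-m}` for `j = m`; it factorizes as the product of the geometric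
`2^{-m}` marginals if and only if `c = 2`. -/
theorem stmt_17 (c : ℝ) (hc : 1 < c) :
    let J : ℕ → ℕ → ℝ := fun m j => ∑' k : ℕ,
      if 2 ≤ k then
        (2 : ℝ) ^ (1 - (k : ℤ)) *
          (if k = m ∧ j < m then
              (c - 1) * c ^ ((k : ℤ) - (j : ℤ) - 1) * c ^ (1 - (k : ℤ)) / 2
           else if k = j ∧ m < j then
              (c - 1) * c ^ ((k : ℤ) - (m : ℤ) - 1) * c ^ (1 - (k : ℤ)) / 2
           else if m = j ∧ j = k - 1 then c ^ (1 - (k : ℤ))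
           else 0)
      else 0
    (∀ m j : ℕ, 1 ≤ j → j < m →
        J m j = (c - 1) * c ^ (-(j : ℤ)) * 2 ^ (-(m : ℤ))) ∧
    (∀ m : ℕ, 1 ≤ m → J m m = c ^ (-(m : ℤ)) * 2 ^ (-(m : ℤ))) ∧
    ((∀ m j : ℕ, 1 ≤ m → 1 ≤ j →
        J m j = (2 : ℝ) ^ (-(m : ℤ)) * 2 ^ (-(j : ℤ))) ↔ c = 2) := by
  intro J
  have hc0 : (0:ℝ) < c := lt_trans one_pos hc
  have hc' : c ≠ 0 := ne_of_gt hc0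
  have h2' : (2:ℝ) ≠ 0 := two_ne_zero
  have key1 : ∀ m j : ℕ, 1 ≤ j → j < m →
      J m j = (c - 1) * c ^ (-(j : ℤ)) * 2 ^ (-(m : ℤ)) := by
    intro m j hj hjm
    have hm2 : 2 ≤ m := by omega
    have hJ : J m j = (2 : ℝ) ^ (1 - (m : ℤ)) *
        ((c - 1) * c ^ ((m : ℤ) - (j : ℤ) - 1) * c ^ (1 - (m : ℤ)) / 2) := by
      simp only [J]
      rw [tsum_eq_single m]
      · simp [hm2, hjm]
      · intro k hk
        by_cases h2 : 2 ≤ k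
        · have h1 : ¬(k = m ∧ j < m) := by tauto
          have hb : ¬(k = j ∧ m < j) := by omega
          have h3 : ¬(m = j ∧ j = k - 1) := by omega
          simp [h2, h1, hb, h3]
        · simp [h2]
    rw [hJ]
    simp only [zpow_sub₀ hc', zpow_sub₀ h2', zpow_neg, zpow_one]
    field_simp
  have key2 : ∀ m : ℕ, 1 ≤ m → J m m = c ^ (-(m : ℤ)) * 2 ^ (-(m : ℤ)) := by
    intro m hm
    have hJ : J m m = (2 : ℝ) ^ (1 - ((m+1 : ℕ) : ℤ)) * (c ^ (1 - ((m+1 : ℕ) : ℤ))) := by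
      simp only [J]
      rw [tsum_eq_single (m+1)]
      · have h2 : 2 ≤ m + 1 := by omega
        have h1 : ¬(m + 1 = m ∧ m < m) := by omega
        simp [h2, h1]
      · intro k hk
        by_cases h2 : 2 ≤ k
        · have h1 : ¬(k = m ∧ m < m) := by omega
          have h3 : ¬(m = k - 1) := by omega
          simp [h2, h1, h3]
        · simp [h2]
    rw [hJ]
    push_cast
    rw [show (1 - ((m:ℤ)+1)) = -(m:ℤ) by ring]
    ring
  refine ⟨key1, key2, ?_⟩
  have key3 : ∀ m j : ℕ, 1 ≤ m → m < j →
      J m j = (c - 1) * c ^ (-(m : ℤ)) * 2 ^ (-(j : ℤ)) := by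
    intro m j hm hmj
    have hj2 : 2 ≤ j := by omega
    have hJ : J m j = (2 : ℝ) ^ (1 - (j : ℤ)) *
        ((c - 1) * c ^ ((j : ℤ) - (m : ℤ) - 1) * c ^ (1 - (j : ℤ)) / 2) := by
      simp only [J]
      rw [tsum_eq_single j]
      · have h1 : ¬(j = m ∧ j < m) := by omega
        simp [hj2, h1, hmj, (by omega : ¬(m = j ∧ j = j - 1))]
      · intro k hk
        by_cases h2 : 2 ≤ k
        · have h1 : ¬(k = m ∧ j < m) := by omega
          have hb : ¬(k = j ∧ m < j) := by tauto
          have h3 : ¬(m = j ∧ j = k - 1) := by omega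
          simp [h2, h1, hb, h3]
        · simp [h2]
    rw [hJ]
    simp only [zpow_sub₀ hc', zpow_sub₀ h2', zpow_neg, zpow_one]
    field_simp
  constructor
  · intro h
    have h11 := h 1 1 le_rfl le_rfl
    rw [key2 1 le_rfl] at h11
    simp only [Nat.cast_one, zpow_neg, zpow_one] at h11
    field_simp at h11
    linarith
  · intro hc2
    subst hc2
    intro m j hm hj
    rcases lt_trichotomy j m with h | h | h
    · rw [key1 m j hj h]; ring
    · rw [h, key2 m hm]
    · rw [key3 m j hm h]
      ring
end
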